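/- Let p ∈ ℝ² and let Q, R be finite subsets of ℝ² such that p₁ > r₁ and q₁ > r₁ for every q ∈ Q and r ∈ R, and p₂ > q₂ for every q ∈ Q (the first coordinate separates {p} ∪ Q from R, and the second coordinate separates p from Q). Then for all targets t₁, t₂, t₃ ∈ ℝ and every ε > 0 there exists a two-hidden-layer logistic network N : ℝ² → ℝ such that |N(p) − t₁| < ε, |N(q) − t₂| < ε for every q ∈ Q, and |N(r) − t₃| < ε for every r ∈ R. (The neural implementation of a triple basis extends to set-triples: the network assigns a distinguished value to the chosen item, a common value to the rest of the choice set, and a common value to all outside items.) -/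

import Mathlib

/-! With thresholds `θ₁` separating the first coordinates of `{p} ∪ Q` from those of `R` and
`θ₂` separating the second coordinate of `p` from those of `Q`, the first layer computes the
steps `[z₁ > θ₁]` and `[z₂ > θ₂]` and the second layer the step `[z₁ > θ₁]` and the conjunction
`[z₁ > θ₁ ∧ z₂ > θ₂]`, all sharpened by a common gain `k`. The output
`t₃ + (t₂ - t₃) [z₁ > θ₁] + (t₁ - t₂) [z₁ > θ₁ ∧ z₂ > θ₂]` then tends to `t₁` on `p`, `t₂` on `Q`
and `t₃` on `R` as `k → ∞`; since all three sets are finite, one gain works for all points. -/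

/-- The logistic sigmoid `σ(t) = 1 / (1 + exp (−t))`. -/
noncomputable def sigmoid (t : ℝ) : ℝ := 1 / (1 + Real.exp (-t))

/-- A fully connected network `ℝ² → ℝ` with two hidden layers of two logistic units each
and a linear output unit. -/
noncomputable def twoLayerNet (a₁ a₂ a₃ a₄ : ℝ × ℝ) (β₁ β₂ β₃ β₄ c₀ c₁ c₂ : ℝ)
    (z : ℝ × ℝ) : ℝ :=
  let h₁ := sigmoid (a₁.1 * z.1 + a₁.2 * z.2 + β₁)
  let h₂ := sigmoid (a₂.1 * z.1 + a₂.2 * z.2 + β₂)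
  c₁ * sigmoid (a₃.1 * h₁ + a₃.2 * h₂ + β₃) +
    c₂ * sigmoid (a₄.1 * h₁ + a₄.2 * h₂ + β₄) + c₀

open Filter Topology

lemma sigmoid_eq_real_sigmoid : sigmoid = Real.sigmoid :=
  funext fun _ => one_div _

section Gain

variable {g : ℝ → ℝ} {c : ℝ}

lemma tendsto_sigmoid_mul_of_eventually_ge (hc : 0 < c) (hg : ∀ᶠ k in atTop, c ≤ g k) :
    Tendsto (fun k => Real.sigmoid (k * g k)) atTop (𝓝 1) := by
  refine Real.tendsto_sigmoid_atTop.comp (tendsto_atTop_mono' atTop ?_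
    (tendsto_id.atTop_mul_const hc))
  filter_upwards [hg, eventually_ge_atTop 0] with k hk hk₀
  exact mul_le_mul_of_nonneg_left hk hk₀

lemma tendsto_sigmoid_mul_of_eventually_le (hc : c < 0) (hg : ∀ᶠ k in atTop, g k ≤ c) :
    Tendsto (fun k => Real.sigmoid (k * g k)) atTop (𝓝 0) := by
  refine Real.tendsto_sigmoid_atBot.comp (tendsto_atBot_mono' atTop ?_
    (tendsto_id.atTop_mul_const_of_neg hc))
  filter_upwards [hg, eventually_ge_atTop 0] with k hk hk₀
  exact mul_le_mul_of_nonneg_left hk hk₀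

lemma tendsto_sigmoid_mul_of_tendsto_pos (hg : Tendsto g atTop (𝓝 c)) (hc : 0 < c) :
    Tendsto (fun k => Real.sigmoid (k * g k)) atTop (𝓝 1) :=
  tendsto_sigmoid_mul_of_eventually_ge (half_pos hc) (hg.eventually_const_le (half_lt_self hc))

lemma tendsto_sigmoid_mul_of_tendsto_neg (hg : Tendsto g atTop (𝓝 c)) (hc : c < 0) :
    Tendsto (fun k => Real.sigmoid (k * g k)) atTop (𝓝 0) :=
  tendsto_sigmoid_mul_of_eventually_le (by linarith)
    (hg.eventually_le_const (by linarith : c < c / 2))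

end Gain

/-- The network with first-layer thresholds `θ₁`, `θ₂`, output values `t₁`, `t₂`, `t₃` and
gain `k`. -/
noncomputable def selectorNet (θ₁ θ₂ t₁ t₂ t₃ k : ℝ) : ℝ × ℝ → ℝ :=
  twoLayerNet (k, 0) (0, k) (k, 0) (k, k) (-(k * θ₁)) (-(k * θ₂)) (-(k / 2)) (-(3 * k / 2))
    t₃ (t₂ - t₃) (t₁ - t₂)

section SelectorNet

variable {θ₁ θ₂ t₁ t₂ t₃ : ℝ} {z : ℝ × ℝ}

lemma selectorNet_apply (k : ℝ) :
    selectorNet θ₁ θ₂ t₁ t₂ t₃ k z =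
      t₃ + (t₂ - t₃) * Real.sigmoid (k * (Real.sigmoid (k * (z.1 - θ₁)) - 1 / 2)) +
        (t₁ - t₂) * Real.sigmoid
          (k * (Real.sigmoid (k * (z.1 - θ₁)) + Real.sigmoid (k * (z.2 - θ₂)) - 3 / 2)) := by
  simp only [selectorNet, twoLayerNet, sigmoid_eq_real_sigmoid]
  ring_nf

lemma tendsto_selectorNet {a b : ℝ}
    (ha : Tendsto (fun k => Real.sigmoid (k * (Real.sigmoid (k * (z.1 - θ₁)) - 1 / 2)))
      atTop (𝓝 a))
    (hb : Tendsto (fun k => Real.sigmoid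
      (k * (Real.sigmoid (k * (z.1 - θ₁)) + Real.sigmoid (k * (z.2 - θ₂)) - 3 / 2))) atTop (𝓝 b)) :
    Tendsto (fun k => selectorNet θ₁ θ₂ t₁ t₂ t₃ k z) atTop
      (𝓝 (t₃ + (t₂ - t₃) * a + (t₁ - t₂) * b)) := by
  simp only [selectorNet_apply]
  exact ((ha.const_mul _).const_add _).add (hb.const_mul _)

lemma tendsto_sigmoid_mul_sub_of_lt {θ x : ℝ} (h : θ < x) :
    Tendsto (fun k => Real.sigmoid (k * (x - θ))) atTop (𝓝 1) :=
  tendsto_sigmoid_mul_of_tendsto_pos tendsto_const_nhds (sub_pos.2 h)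

lemma tendsto_sigmoid_mul_sub_of_gt {θ x : ℝ} (h : x < θ) :
    Tendsto (fun k => Real.sigmoid (k * (x - θ))) atTop (𝓝 0) :=
  tendsto_sigmoid_mul_of_tendsto_neg tendsto_const_nhds (sub_neg.2 h)

lemma tendsto_selectorNet_of_lt_of_lt (h₁ : θ₁ < z.1) (h₂ : θ₂ < z.2) :
    Tendsto (fun k => selectorNet θ₁ θ₂ t₁ t₂ t₃ k z) atTop (𝓝 t₁) := by
  have hu := tendsto_sigmoid_mul_sub_of_lt h₁
  have hw := tendsto_sigmoid_mul_sub_of_lt h₂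
  convert tendsto_selectorNet
    (tendsto_sigmoid_mul_of_tendsto_pos (hu.sub_const (1 / 2)) (by norm_num))
    (tendsto_sigmoid_mul_of_tendsto_pos ((hu.add hw).sub_const (3 / 2)) (by norm_num)) using 2
  ring

lemma tendsto_selectorNet_of_lt_of_gt (h₁ : θ₁ < z.1) (h₂ : z.2 < θ₂) :
    Tendsto (fun k => selectorNet θ₁ θ₂ t₁ t₂ t₃ k z) atTop (𝓝 t₂) := by
  have hu := tendsto_sigmoid_mul_sub_of_lt h₁
  have hw := tendsto_sigmoid_mul_sub_of_gt h₂
  convert tendsto_selectorNet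
    (tendsto_sigmoid_mul_of_tendsto_pos (hu.sub_const (1 / 2)) (by norm_num))
    (tendsto_sigmoid_mul_of_tendsto_neg ((hu.add hw).sub_const (3 / 2)) (by norm_num)) using 2
  ring

lemma tendsto_selectorNet_of_gt (h₁ : z.1 < θ₁) :
    Tendsto (fun k => selectorNet θ₁ θ₂ t₁ t₂ t₃ k z) atTop (𝓝 t₃) := by
  have hu := tendsto_sigmoid_mul_sub_of_gt h₁
  -- the second unit is bounded by 1, so the conjunction is off once the first one is
  have hv : ∀ᶠ k in atTop,
      Real.sigmoid (k * (z.1 - θ₁)) + Real.sigmoid (k * (z.2 - θ₂)) - 3 / 2 ≤ -(1 / 4) := by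
    filter_upwards [hu.eventually_le_const (by norm_num : (0 : ℝ) < 1 / 4)] with k hk
    linarith [Real.sigmoid_lt_one (k * (z.2 - θ₂))]
  convert tendsto_selectorNet
    (tendsto_sigmoid_mul_of_tendsto_neg (hu.sub_const (1 / 2)) (by norm_num))
    (tendsto_sigmoid_mul_of_eventually_le (by norm_num) hv) using 2
  ring

end SelectorNet

/-- the neural implementation of a triple basis extends to set-triples:
if the first coordinate separates `{p} ∪ Q` from `R` and the second separates `p` from `Q`,
a two-hidden-layer logistic network assigns a distinguished value to `p`, a common value to
`Q`, and a common value to `R`, all to arbitrary precision. -/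
theorem stmt10 (p : ℝ × ℝ) (Q R : Finset (ℝ × ℝ))
    (hpR : ∀ r ∈ R, r.1 < p.1)
    (hQR : ∀ q ∈ Q, ∀ r ∈ R, r.1 < q.1)
    (hpQ : ∀ q ∈ Q, q.2 < p.2) :
    ∀ t₁ t₂ t₃ : ℝ, ∀ ε > (0 : ℝ),
      ∃ a₁ a₂ a₃ a₄ : ℝ × ℝ, ∃ β₁ β₂ β₃ β₄ c₀ c₁ c₂ : ℝ,
        |twoLayerNet a₁ a₂ a₃ a₄ β₁ β₂ β₃ β₄ c₀ c₁ c₂ p - t₁| < ε ∧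
        (∀ q ∈ Q, |twoLayerNet a₁ a₂ a₃ a₄ β₁ β₂ β₃ β₄ c₀ c₁ c₂ q - t₂| < ε) ∧
        (∀ r ∈ R, |twoLayerNet a₁ a₂ a₃ a₄ β₁ β₂ β₃ β₄ c₀ c₁ c₂ r - t₃| < ε) := by
  intro t₁ t₂ t₃ ε hε
  obtain ⟨θ₁, hRθ₁, hθ₁⟩ := Finset.exists_between' (R.image Prod.fst)
    (insert p.1 (Q.image Prod.fst)) (by
      simp only [Finset.forall_mem_image, Finset.forall_mem_insert]
      exact fun r hr => ⟨hpR r hr, fun q hq => hQR q hq r hr⟩)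
  obtain ⟨θ₂, hQθ₂, hθ₂⟩ := Finset.exists_between' (Q.image Prod.snd) {p.2} (by
    simpa only [Finset.forall_mem_image, Finset.mem_singleton, forall_eq] using hpQ)
  simp only [Finset.forall_mem_image, Finset.forall_mem_insert, Finset.mem_singleton,
    forall_eq] at hRθ₁ hθ₁ hQθ₂ hθ₂
  have hp : ∀ᶠ k in atTop, |selectorNet θ₁ θ₂ t₁ t₂ t₃ k p - t₁| < ε :=
    (tendsto_selectorNet_of_lt_of_lt hθ₁.1 hθ₂).eventually (eventually_abs_sub_lt _ hε)
  have hQ : ∀ᶠ k in atTop, ∀ q ∈ Q, |selectorNet θ₁ θ₂ t₁ t₂ t₃ k q - t₂| < ε :=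
    (eventually_all_finset Q).2 fun q hq =>
      (tendsto_selectorNet_of_lt_of_gt (hθ₁.2 hq) (hQθ₂ hq)).eventually
        (eventually_abs_sub_lt _ hε)
  have hR : ∀ᶠ k in atTop, ∀ r ∈ R, |selectorNet θ₁ θ₂ t₁ t₂ t₃ k r - t₃| < ε :=
    (eventually_all_finset R).2 fun r hr =>
      (tendsto_selectorNet_of_gt (hRθ₁ hr)).eventually (eventually_abs_sub_lt _ hε)
  obtain ⟨k, hpk, hQk, hRk⟩ := (hp.and (hQ.and hR)).exists
  exact ⟨_, _, _, _, _, _, _, _, _, _, _, hpk, hQk, hRk⟩
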